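/- Let 0 ≤ α ≤ 1/4 and let A = {a_1 < a_2 < ...} and B = {b_1 < b_2 < ...} be two infinite subsets of ℕ such that a_i − b_i = o(a_i^{1/2−α}) as i → ∞. Then A(n) − B(n) = o(n^{1/2−α}) as n → ∞. -/
import Mathlib


open Filter Asymptotics

/-- The counting function `A(n) = |{a ∈ A : a ≤ n}|`. -/
noncomputable def countFn (A : Set ℕ) (n : ℕ) : ℕ := (A ∩ Set.Iic n).ncard

lemma countFn_eq_count (A : Set ℕ) [DecidablePred (· ∈ A)] (n : ℕ) :
    countFn A n = Nat.count (· ∈ A) (n + 1) := by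
  rw [Nat.count_eq_card_filter_range, countFn, ← Set.ncard_coe_finset]
  congr 1
  ext k
  simp [Nat.lt_succ_iff, and_comm]

lemma lt_countFn_iff (A : Set ℕ) (hA : A.Infinite) (i n : ℕ) :
    i < countFn A n ↔ Nat.nth (· ∈ A) i ≤ n := by
  classical
  have hA' : (setOf (fun x => x ∈ A)).Infinite := hA
  rw [countFn_eq_count, Nat.lt_nth_iff_count_lt hA', Nat.lt_succ_iff]

lemma strictMono_add_le {f : ℕ → ℕ} (hf : StrictMono f) (K m : ℕ) :
    f K + m ≤ f (K + m) := by
  induction m with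
  | zero => simp
  | succ m ih =>
    have h : f (K + m) < f (K + m + 1) := hf (by omega)
    show f K + (m + 1) ≤ f (K + m + 1)
    omega

lemma key (β ε : ℝ) (hβ0 : 0 < β) (hβ1 : β ≤ 1) (hε0 : 0 < ε) (hε2 : ε ≤ 1/2)
    (A B : Set ℕ) (hA : A.Infinite) (hB : B.Infinite) (I : ℕ)
    (hab : ∀ i, I ≤ i →
      |(Nat.nth (· ∈ A) i : ℝ) - (Nat.nth (· ∈ B) i : ℝ)| ≤ ε * (Nat.nth (· ∈ A) i : ℝ) ^ β)
    (n : ℕ) (hn1 : 1 ≤ n) (hIA : I < countFn A n) (hIB : I < countFn B n) :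
    |(countFn A n : ℝ) - (countFn B n : ℝ)| ≤ 2 * ε * (n : ℝ) ^ β + 1 := by
  set a := Nat.nth (· ∈ A) with ha_def
  set b := Nat.nth (· ∈ B) with hb_def
  have hA' : (setOf (fun x => x ∈ A)).Infinite := hA
  have hB' : (setOf (fun x => x ∈ B)).Infinite := hB
  have hsa : StrictMono a := Nat.nth_strictMono hA'
  have hsb : StrictMono b := Nat.nth_strictMono hB'
  set cA := countFn A n with hcA_def
  set cB := countFn B n with hcB_def
  have hiffA : ∀ i, i < cA ↔ a i ≤ n := fun i => lt_countFn_iff A hA i n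
  have hiffB : ∀ i, i < cB ↔ b i ≤ n := fun i => lt_countFn_iff B hB i n
  have hnβ : (0:ℝ) ≤ (n:ℝ) ^ β := Real.rpow_nonneg (by positivity) β
  rcases lt_trichotomy cA cB with hlt | heq | hgt
  · -- cA < cB : the hard case, K := cA
    have hbK : b cA ≤ n := (hiffB cA).1 hlt
    have haK : n < a cA := by
      by_contra h
      exact absurd ((hiffA cA).2 (le_of_not_gt h)) (lt_irrefl cA)
    have ha1 : (1:ℝ) ≤ (a cA : ℝ) := by
      have : 1 ≤ a cA := le_trans hn1 (Nat.le_of_lt haK)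
      exact_mod_cast this
    have habs := hab cA hIA.le
    have hrle : (a cA : ℝ) ^ β ≤ (a cA : ℝ) := by
      calc (a cA:ℝ)^β ≤ (a cA:ℝ)^(1:ℝ) := Real.rpow_le_rpow_of_exponent_le ha1 hβ1
      _ = a cA := Real.rpow_one _
    have hbKr : (b cA:ℝ) ≤ (n:ℝ) := by exact_mod_cast hbK
    have h2n : (a cA : ℝ) ≤ 2 * n := by
      have h1 : (a cA : ℝ) - b cA ≤ ε * (a cA:ℝ)^β := le_trans (le_abs_self _) habs
      nlinarith [Real.rpow_nonneg (show (0:ℝ) ≤ (a cA:ℝ) by positivity) β]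
    have h2nβ : (a cA:ℝ)^β ≤ 2 * (n:ℝ)^β := by
      calc (a cA:ℝ)^β ≤ ((2*(n:ℝ)))^β :=
            Real.rpow_le_rpow (by positivity) h2n hβ0.le
        _ = (2:ℝ)^β * (n:ℝ)^β := Real.mul_rpow (by norm_num) (by positivity)
        _ ≤ 2 * (n:ℝ)^β := by
            have h2 : (2:ℝ)^β ≤ (2:ℝ)^(1:ℝ) :=
              Real.rpow_le_rpow_of_exponent_le one_le_two hβ1
            rw [Real.rpow_one] at h2
            nlinarith
    have hfin : (a cA:ℝ) - b cA ≤ 2*ε*(n:ℝ)^β := by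
      have h1 : (a cA : ℝ) - b cA ≤ ε * (a cA:ℝ)^β := le_trans (le_abs_self _) habs
      nlinarith
    have hnat : b cA + cB ≤ n + cA + 1 := by
      have hd : cA + (cB - 1 - cA) = cB - 1 := by omega
      have h3 := strictMono_add_le hsb cA (cB - 1 - cA)
      rw [hd] at h3
      have h4 := (hiffB (cB-1)).1 (by omega)
      omega
    have hcast : (b cA:ℝ) + cB ≤ (n:ℝ) + cA + 1 := by exact_mod_cast hnat
    have haKr : (n:ℝ) < a cA := by exact_mod_cast haK
    rw [abs_sub_comm, abs_of_nonneg (sub_nonneg.2 (by exact_mod_cast hlt.le))]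
    linarith
  · rw [heq, sub_self, abs_zero]
    nlinarith
  · -- cA > cB : the easy case, K := cB
    have haK : a cB ≤ n := (hiffA cB).1 hgt
    have hbK : n < b cB := by
      by_contra h
      exact absurd ((hiffB cB).2 (le_of_not_gt h)) (lt_irrefl cB)
    have habs := hab cB hIB.le
    have haβ : (a cB:ℝ)^β ≤ (n:ℝ)^β :=
      Real.rpow_le_rpow (by positivity) (by exact_mod_cast haK) hβ0.le
    have hfin : (b cB:ℝ) - a cB ≤ ε * (n:ℝ)^β := by
      have h' : (b cB:ℝ) - a cB ≤ |(a cB:ℝ) - b cB| := by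
        rw [abs_sub_comm]; exact le_abs_self _
      nlinarith
    have hnat : a cB + cA ≤ n + cB + 1 := by
      have hd : cB + (cA - 1 - cB) = cA - 1 := by omega
      have h3 := strictMono_add_le hsa cB (cA - 1 - cB)
      rw [hd] at h3
      have h4 := (hiffA (cA-1)).1 (by omega)
      omega
    have hcast : (a cB:ℝ) + cA ≤ (n:ℝ) + cB + 1 := by exact_mod_cast hnat
    have hbKr : (n:ℝ) < b cB := by exact_mod_cast hbK
    rw [abs_of_nonneg (sub_nonneg.2 (by exact_mod_cast hgt.le))]
    nlinarith

theorem stmt17 (α : ℝ) (hα0 : 0 ≤ α) (hα1 : α ≤ 1 / 4)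
    (A B : Set ℕ) (hA : A.Infinite) (hB : B.Infinite)
    (h1 : (fun i : ℕ => (Nat.nth (· ∈ A) i : ℝ) - (Nat.nth (· ∈ B) i : ℝ))
      =o[atTop] fun i : ℕ => (Nat.nth (· ∈ A) i : ℝ) ^ ((1 : ℝ) / 2 - α)) :
    (fun n : ℕ => (countFn A n : ℝ) - (countFn B n : ℝ))
      =o[atTop] fun n : ℕ => (n : ℝ) ^ ((1 : ℝ) / 2 - α) := by
  set β : ℝ := (1:ℝ)/2 - α with hβ_def
  have hβ0 : 0 < β := by rw [hβ_def]; linarith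
  have hβ1 : β ≤ 1 := by rw [hβ_def]; linarith
  rw [isLittleO_iff]
  intro c hc
  set ε : ℝ := min (c/4) (1/2) with hε_def
  have hε0 : 0 < ε := lt_min (by linarith) (by norm_num)
  have hε2 : ε ≤ 1/2 := min_le_right _ _
  have hεc : 2*ε ≤ c/2 := by
    have := min_le_left (c/4) (1/2:ℝ)
    have : ε ≤ c/4 := this
    linarith
  have h1' := (isLittleO_iff.1 h1) hε0
  rw [eventually_atTop] at h1'
  obtain ⟨I, hI⟩ := h1'
  have hab : ∀ i, I ≤ i →
      |(Nat.nth (· ∈ A) i : ℝ) - (Nat.nth (· ∈ B) i : ℝ)|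
        ≤ ε * (Nat.nth (· ∈ A) i : ℝ) ^ β := by
    intro i hi
    have h2 := hI i hi
    rwa [Real.norm_eq_abs, Real.norm_eq_abs,
      abs_of_nonneg (Real.rpow_nonneg (by positivity) _)] at h2
  have hevA : ∀ᶠ n : ℕ in atTop, I < countFn A n := by
    filter_upwards [eventually_ge_atTop (Nat.nth (· ∈ A) I)] with n hn
    exact (lt_countFn_iff A hA I n).2 hn
  have hevB : ∀ᶠ n : ℕ in atTop, I < countFn B n := by
    filter_upwards [eventually_ge_atTop (Nat.nth (· ∈ B) I)] with n hn
    exact (lt_countFn_iff B hB I n).2 hn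
  have htend : Tendsto (fun n : ℕ => (n:ℝ)^β) atTop atTop :=
    (tendsto_rpow_atTop hβ0).comp tendsto_natCast_atTop_atTop
  have hevβ : ∀ᶠ n : ℕ in atTop, 2/c ≤ (n:ℝ)^β := htend.eventually_ge_atTop _
  filter_upwards [hevA, hevB, hevβ, eventually_ge_atTop 1] with n hnA hnB hnβ hn1
  have hkey := key β ε hβ0 hβ1 hε0 hε2 A B hA hB I hab n hn1 hnA hnB
  have hnβ0 : (0:ℝ) ≤ (n:ℝ)^β := Real.rpow_nonneg (by positivity) β
  rw [Real.norm_eq_abs, Real.norm_eq_abs, abs_of_nonneg hnβ0]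
  have h5 : 2*ε*(n:ℝ)^β ≤ (c/2)*(n:ℝ)^β := mul_le_mul_of_nonneg_right hεc hnβ0
  have h6 : (c/2)*(2/c) ≤ (c/2)*(n:ℝ)^β := mul_le_mul_of_nonneg_left hnβ (by linarith)
  have h7 : (c/2)*(2/c) = 1 := by field_simp
  linarith
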